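/- Suppose g is solvable and not abelian, admits an invariant metric, and has an abelian descending central ideal (i.e. there exists ℓ ≥ 1 with [g^ℓ, g^ℓ] = {0}). Then the canonical ideals are both nonzero: i(g) ≠ {0} and j(g) ≠ {0}. -/

import Mathlib

/-- The descending central series of a Lie algebra: `g^0 = g`, `g^k = [g, g^{k-1}]`
(the span of such brackets), as submodules. -/
def dcs (F : Type*) [Field F] (g : Type*) [LieRing g] [LieAlgebra F g] :
    ℕ → Submodule F g
  | 0 => ⊤
  | k + 1 => Submodule.span F {z : g | ∃ x : g, ∃ w ∈ dcs F g k, z = ⁅x, w⁆}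

/-- The derived (upper) central series of a Lie algebra:
`C_0(g) = {0}`, `C_k(g) = {x : [x, g] ⊆ C_{k-1}(g)}`, as submodules. -/
def ucs (F : Type*) [Field F] (g : Type*) [LieRing g] [LieAlgebra F g] :
    ℕ → Submodule F g
  | 0 => ⊥
  | k + 1 =>
    { carrier := {x : g | ∀ y : g, ⁅x, y⁆ ∈ ucs F g k}
      add_mem' := fun {u v} hu hv y => by
        rw [add_lie]; exact (ucs F g k).add_mem (hu y) (hv y)
      zero_mem' := fun y => by
        rw [zero_lie]; exact (ucs F g k).zero_mem
      smul_mem' := fun c u hu y => by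
        rw [smul_lie]; exact (ucs F g k).smul_mem c (hu y) }

/-- The canonical ideal `i(g) = Σ_{k≥1} (C_k(g) ∩ g^k)`. -/
def iIdeal (F : Type*) [Field F] (g : Type*) [LieRing g] [LieAlgebra F g] :
    Submodule F g :=
  ⨆ k : ℕ, ⨆ _ : 1 ≤ k, (ucs F g k ⊓ dcs F g k)

/-- The canonical ideal `j(g) = ⋂_{k≥1} (C_k(g) + g^k)`. -/
def jIdeal (F : Type*) [Field F] (g : Type*) [LieRing g] [LieAlgebra F g] :
    Submodule F g :=
  ⨅ k : ℕ, ⨅ _ : 1 ≤ k, (ucs F g k ⊔ dcs F g k)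

section stmt11aux

variable {F : Type*} [Field F] {g : Type*} [LieRing g] [LieAlgebra F g]

lemma mem_ucs_succ' {k : ℕ} {x : g} :
    x ∈ ucs F g (k + 1) ↔ ∀ y : g, ⁅x, y⁆ ∈ ucs F g k := Iff.rfl

lemma lie_mem_dcs_succ' {k : ℕ} (x : g) {w : g} (hw : w ∈ dcs F g k) :
    ⁅x, w⁆ ∈ dcs F g (k + 1) :=
  Submodule.subset_span ⟨x, w, hw, rfl⟩

lemma dcs_succ_le' : ∀ k : ℕ, dcs F g (k + 1) ≤ dcs F g k
  | 0 => le_top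
  | (k + 1) => by
    show Submodule.span F {z : g | ∃ x : g, ∃ w ∈ dcs F g (k + 1), z = ⁅x, w⁆} ≤ _
    rw [Submodule.span_le]
    rintro z ⟨x, w, hw, rfl⟩
    exact lie_mem_dcs_succ' x (dcs_succ_le' k hw)

lemma dcs_antitone' : Antitone (dcs F g) :=
  antitone_nat_of_succ_le dcs_succ_le'

lemma ucs_monotone' : Monotone (ucs F g) := by
  apply monotone_nat_of_le_succ
  intro k
  induction k with
  | zero => exact bot_le
  | succ k ih => exact fun x hx y => ih (hx y)

lemma perp_le_ucs' (B : g →ₗ[F] g →ₗ[F] F)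
    (hnondeg : ∀ x : g, (∀ y : g, B x y = 0) → x = 0)
    (hinv : ∀ x y z : g, B ⁅x, y⁆ z = B x ⁅y, z⁆) :
    ∀ k : ℕ, ∀ x : g, (∀ w ∈ dcs F g k, B x w = 0) → x ∈ ucs F g k := by
  intro k
  induction k with
  | zero =>
    intro x hx
    rw [show ucs F g 0 = ⊥ from rfl, Submodule.mem_bot]
    exact hnondeg x fun y => hx y Submodule.mem_top
  | succ k ih =>
    intro x hx
    rw [mem_ucs_succ']
    intro y
    apply ih
    intro w hw
    rw [hinv]
    exact hx _ (lie_mem_dcs_succ' y hw)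
end stmt11aux

/-- if `g` is solvable, non-abelian, admits an invariant metric, and
some `g^ℓ` (`ℓ ≥ 1`) is abelian, then `i(g) ≠ 0` and `j(g) ≠ 0`. -/
theorem stmt11 {F : Type*} [Field F] [CharZero F] (g : Type*) [LieRing g] [LieAlgebra F g]
    [Module.Finite F g] [LieAlgebra.IsSolvable g]
    (hnonab : ∃ x y : g, ⁅x, y⁆ ≠ 0)
    (B : g →ₗ[F] g →ₗ[F] F)
    (hsymm : ∀ x y : g, B x y = B y x)
    (hnondeg : ∀ x : g, (∀ y : g, B x y = 0) → x = 0)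
    (hinv : ∀ x y z : g, B ⁅x, y⁆ z = B x ⁅y, z⁆)
    (habel : ∃ ℓ : ℕ, 1 ≤ ℓ ∧ ∀ u ∈ dcs F g ℓ, ∀ v ∈ dcs F g ℓ, ⁅u, v⁆ = 0) :
    iIdeal F g ≠ ⊥ ∧ jIdeal F g ≠ ⊥ := by
  obtain ⟨x0, y0, hxy⟩ := hnonab
  obtain ⟨ℓ, hℓ1, hℓab⟩ := habel
  classical
  have h1 : dcs F g 1 ≠ ⊥ := by
    intro h
    have hm : ⁅x0, y0⁆ ∈ dcs F g 1 := lie_mem_dcs_succ' x0 Submodule.mem_top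
    rw [h, Submodule.mem_bot] at hm
    exact hxy hm
  have h0 : dcs F g 0 ≠ ⊥ := by
    intro h
    have hm : ⁅x0, y0⁆ ∈ (⊥ : Submodule F g) := h ▸ Submodule.mem_top
    exact hxy (Submodule.mem_bot F |>.mp hm)
  -- helper to conclude nonbotness from a nonbot submodule below
  have nebot : ∀ (S T : Submodule F g), S ≤ T → S ≠ ⊥ → T ≠ ⊥ := by
    intro S T hle hS hT
    exact hS (le_bot_iff.mp (hT ▸ hle))
  by_cases hcase : ∃ k, dcs F g k = ⊥
  · -- the descending series dies: last nonzero term is central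
    set m := Nat.find hcase with hmdef
    have hm0 : dcs F g m = ⊥ := Nat.find_spec hcase
    have hm2 : 2 ≤ m := by
      rcases Nat.lt_or_ge m 2 with h | h
      · interval_cases m
        · exact absurd hm0 h0
        · exact absurd hm0 h1
      · exact h
    have hm'lt : m - 1 < m := by omega
    have hm'1 : 1 ≤ m - 1 := by omega
    have hne : dcs F g (m - 1) ≠ ⊥ := Nat.find_min hcase hm'lt
    have hsucc : m - 1 + 1 = m := by omega
    have hcent : dcs F g (m - 1) ≤ ucs F g 1 := by
      intro x hx
      rw [mem_ucs_succ']
      intro y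
      have hb : ⁅y, x⁆ ∈ dcs F g m := hsucc ▸ lie_mem_dcs_succ' y hx
      rw [hm0, Submodule.mem_bot] at hb
      show ⁅x, y⁆ ∈ (⊥ : Submodule F g)
      rw [Submodule.mem_bot, ← lie_skew, hb, neg_zero]
    constructor
    · refine nebot (dcs F g (m - 1)) _ ?_ hne
      have : dcs F g (m - 1) ≤ ucs F g (m - 1) ⊓ dcs F g (m - 1) :=
        le_inf (hcent.trans (ucs_monotone' hm'1)) le_rfl
      exact this.trans (le_iSup₂ (f := fun k (_ : 1 ≤ k) => ucs F g k ⊓ dcs F g k) (m - 1) hm'1)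
    · refine nebot (dcs F g (m - 1)) _ ?_ hne
      refine le_iInf₂ fun k hk => ?_
      exact le_sup_left.trans' (hcent.trans (ucs_monotone' hk))
  · push_neg at hcase
    -- orthogonality: dcs (ℓ+1) ⟂ dcs ℓ
    have horth : ∀ v ∈ dcs F g ℓ, ∀ z ∈ dcs F g (ℓ + 1), B z v = 0 := by
      intro v hv z hz
      have hle : dcs F g (ℓ + 1) ≤ LinearMap.ker (B.flip v) := by
        show Submodule.span F {z : g | ∃ x : g, ∃ w ∈ dcs F g ℓ, z = ⁅x, w⁆} ≤ _
        rw [Submodule.span_le]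
        rintro z ⟨x, w, hw, rfl⟩
        rw [SetLike.mem_coe, LinearMap.mem_ker, LinearMap.flip_apply, hinv, hℓab w hw v hv,
          map_zero]
      have := hle hz
      rwa [LinearMap.mem_ker, LinearMap.flip_apply] at this
    have hkey : dcs F g (ℓ + 1) ≤ ucs F g (ℓ + 1) := by
      intro z hz
      apply perp_le_ucs' B hnondeg hinv
      intro w hw
      rw [hsymm]
      exact horth z (dcs_succ_le' ℓ hz) w hw
    constructor
    · refine nebot (dcs F g (ℓ + 1)) _ ?_ (hcase (ℓ + 1))
      have : dcs F g (ℓ + 1) ≤ ucs F g (ℓ + 1) ⊓ dcs F g (ℓ + 1) := le_inf hkey le_rfl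
      exact this.trans
        (le_iSup₂ (f := fun k (_ : 1 ≤ k) => ucs F g k ⊓ dcs F g k) (ℓ + 1) (by omega))
    · -- stabilization of the descending series
      obtain ⟨K, hK⟩ := IsArtinian.monotone_stabilizes
        (⟨fun k => OrderDual.toDual (dcs F g k),
          fun a b hab => (dcs_antitone' hab : dcs F g b ≤ dcs F g a)⟩ : ℕ →o (Submodule F g)ᵒᵈ)
      have hKle : ∀ k : ℕ, dcs F g K ≤ dcs F g k := by
        intro k
        rcases le_total k K with h | h
        · exact dcs_antitone' h
        · exact le_of_eq (congrArg OrderDual.ofDual (hK k h))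
      refine nebot (dcs F g K) _ ?_ (hcase K)
      refine le_iInf₂ fun k hk => (hKle k).trans le_sup_right
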